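/- Let Z be a set of points in ℂ. The following are equivalent: (1) all points of Z are collinear; (2) all differences z_r - z_l, for distinct z_r, z_l in Z such that the open segment between them meets Z only at its endpoints, are pairwise parallel (ℝ-linearly dependent), provided Z has at least two points and Z is closed and discrete. -/

import Mathlib

open Set

private lemma exists_admissible_step (Z : Set ℂ) (hcl : IsClosed Z) (hd : DiscreteTopology Z)
    {a b : ℂ} (ha : a ∈ Z) (hb : b ∈ Z) (hab : a ≠ b) :
    ∃ w ∈ Z, ∃ s : ℝ, 0 < s ∧ w - a = (s : ℂ) * (b - a) ∧
      ∀ t : ℝ, t ∈ Set.Ioo (0 : ℝ) 1 → ((1 - t : ℝ) : ℂ) * a + (t : ℂ) * w ∉ Z := by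
  set p : ℝ → ℂ := fun t => ((1 - t : ℝ) : ℂ) * a + (t : ℂ) * b with hp
  have hpc : Continuous p := by
    simp only [hp]; push_cast; fun_prop
  have hpinj : Function.Injective p := by
    intro s t h
    simp only [hp] at h
    have h2 : ((s - t : ℝ) : ℂ) * (b - a) = 0 := by push_cast at h ⊢; linear_combination h
    rcases mul_eq_zero.mp h2 with h3 | h3
    · have : (s - t : ℝ) = 0 := by exact_mod_cast h3
      linarith [this]
    · exact absurd (sub_eq_zero.mp h3).symm hab
  have hKfin : (Z ∩ p '' Icc (0:ℝ) 1).Finite := by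
    have hK : IsCompact (Z ∩ p '' Icc (0:ℝ) 1) :=
      (isCompact_Icc.image hpc).inter_left hcl
    have : DiscreteTopology ↥(Z ∩ p '' Icc (0:ℝ) 1) :=
      DiscreteTopology.of_subset hd inter_subset_left
    exact hK.finite (isDiscrete_iff_discreteTopology.mpr this)
  set T : Set ℝ := {t | t ∈ Icc (0:ℝ) 1 ∧ 0 < t ∧ p t ∈ Z} with hT
  have hTfin : T.Finite := by
    have hsub : T ⊆ p ⁻¹' (Z ∩ p '' Icc (0:ℝ) 1) := by
      rintro t ⟨ht1, ht2, ht3⟩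
      exact ⟨ht3, mem_image_of_mem p ht1⟩
    exact (hKfin.preimage hpinj.injOn).subset hsub
  have hp1 : p 1 = b := by simp [hp]
  have h1T : (1:ℝ) ∈ T := ⟨⟨by norm_num, le_refl 1⟩, one_pos, by rw [hp1]; exact hb⟩
  obtain ⟨t1, ht1T, hmin⟩ := Set.exists_min_image T id hTfin ⟨1, h1T⟩
  obtain ⟨⟨ht1a, ht1b⟩, ht1pos, ht1Z⟩ := ht1T
  refine ⟨p t1, ht1Z, t1, ht1pos, ?_, ?_⟩
  · simp only [hp]; push_cast; ring
  · rintro s ⟨hs0, hs1⟩ hcon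
    have hq : ((1 - s : ℝ) : ℂ) * a + (s : ℂ) * p t1 = p (s * t1) := by
      simp only [hp]; push_cast; ring
    rw [hq] at hcon
    have hst : s * t1 ∈ T := by
      refine ⟨⟨by positivity, ?_⟩, by positivity, hcon⟩
      calc s * t1 ≤ 1 * t1 := by nlinarith
        _ ≤ 1 := by linarith
    have := hmin _ hst
    simp only [id] at this
    nlinarith

/-- For a closed discrete set `Z ⊆ ℂ` with at least two points, all
points of `Z` are collinear if and only if any two admissible differences
(differences `z r - z l` of distinct points of `Z` whose connecting open segment
misses `Z`) are ℝ-linearly dependent (pairwise parallel). -/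
theorem collinear_iff_admissible_differences_parallel
    (Z : Set ℂ) (h2 : ∃ a ∈ Z, ∃ b ∈ Z, a ≠ b)
    (hcl : IsClosed Z) (hd : DiscreteTopology Z) :
    (∃ a c : ℂ, c ≠ 0 ∧ ∀ z ∈ Z, ∃ t : ℝ, z = a + (t : ℂ) * c) ↔
    (∀ u v : ℂ,
      (∃ zr ∈ Z, ∃ zl ∈ Z, zr ≠ zl ∧ u = zr - zl ∧
        ∀ t : ℝ, t ∈ Set.Ioo (0 : ℝ) 1 → ((1 - t : ℝ) : ℂ) * zl + (t : ℂ) * zr ∉ Z) →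
      (∃ zr ∈ Z, ∃ zl ∈ Z, zr ≠ zl ∧ v = zr - zl ∧
        ∀ t : ℝ, t ∈ Set.Ioo (0 : ℝ) 1 → ((1 - t : ℝ) : ℂ) * zl + (t : ℂ) * zr ∉ Z) →
      ∃ α β : ℝ, ¬(α = 0 ∧ β = 0) ∧ α • u + β • v = 0) := by
  constructor
  · rintro ⟨a, c, hc, hline⟩ u v ⟨zr, hzr, zl, hzl, hne, hu, -⟩ ⟨wr, hwr, wl, hwl, hne', hv, -⟩
    obtain ⟨tr, htr⟩ := hline zr hzr
    obtain ⟨tl, htl⟩ := hline zl hzl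
    obtain ⟨sr, hsr⟩ := hline wr hwr
    obtain ⟨sl, hsl⟩ := hline wl hwl
    refine ⟨sr - sl, -(tr - tl), ?_, ?_⟩
    · rintro ⟨-, hβ⟩
      apply hne
      have : tr = tl := by
        have := neg_eq_zero.mp hβ
        linarith [sub_eq_zero.mp this]
      rw [htr, htl, this]
    · subst hu hv htr htl hsr hsl
      push_cast [Complex.real_smul]
      ring
  · rintro H
    obtain ⟨a, ha, b, hb, hab⟩ := h2
    obtain ⟨w0, hw0Z, s0, hs0, hw0, hadm0⟩ :=
      exists_admissible_step Z hcl hd ha hb hab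
    refine ⟨a, b - a, sub_ne_zero.mpr (Ne.symm hab), ?_⟩
    intro z hz
    by_cases hza : z = a
    · exact ⟨0, by simp [hza]⟩
    obtain ⟨w, hwZ, s, hs, hw, hadm⟩ := exists_admissible_step Z hcl hd ha hz (Ne.symm hza)
    have hwne : w ≠ a := by
      intro h
      rw [h, sub_self] at hw
      have : (s:ℂ) * (z - a) ≠ 0 := by
        apply mul_ne_zero
        · exact_mod_cast hs.ne'
        · exact sub_ne_zero.mpr hza
      exact this hw.symm
    have hw0ne : w0 ≠ a := by
      intro h
      rw [h, sub_self] at hw0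
      have : (s0:ℂ) * (b - a) ≠ 0 := by
        apply mul_ne_zero
        · exact_mod_cast hs0.ne'
        · exact sub_ne_zero.mpr (Ne.symm hab)
      exact this hw0.symm
    obtain ⟨α, β, hαβ, heq⟩ := H (w - a) (w0 - a)
      ⟨w, hwZ, a, ha, hwne, rfl, hadm⟩ ⟨w0, hw0Z, a, ha, hw0ne, rfl, hadm0⟩
    have hα : α ≠ 0 := by
      intro h
      rw [h, zero_smul, zero_add] at heq
      rcases smul_eq_zero.mp heq with h' | h'
      · exact hαβ ⟨h, h'⟩
      · exact hw0ne (by rwa [sub_eq_zero] at h')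
    refine ⟨-β * s0 / (α * s), ?_⟩
    have key : ((α:ℂ)) * ((s:ℂ)) * (z - a) = (-β : ℂ) * (s0:ℂ) * (b - a) := by
      rw [Complex.real_smul, Complex.real_smul] at heq
      rw [hw0] at heq
      rw [hw] at heq
      push_cast
      linear_combination heq
    have hαs : ((α * s : ℝ) : ℂ) ≠ 0 := by
      exact_mod_cast mul_ne_zero hα hs.ne'
    have hαc : (α:ℂ) ≠ 0 := by exact_mod_cast hα
    have hsc : (s:ℂ) ≠ 0 := by exact_mod_cast hs.ne'
    push_cast
    field_simp
    linear_combination key
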